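/- Let X be a compact metric space, f : X → X continuous, and I, J arcs in X with J free (i.e., J = ψ([0,1]) for a homeomorphism ψ with ψ((0,1)) open in X). Suppose 0 ≤ t₀ ≤ a < b ≤ t₁ ≤ c < d ≤ t₂ ≤ 1 for some 0 ≤ a < b ≤ c < d ≤ 1, and ψ(t₀), ψ(t₁), ψ(t₂) ∈ f(I). Then I f-covers ψ([t₀,t₁]) or I f-covers ψ([t₁,t₂]). -/

import Mathlib

/-!
Parametrize `I` from a preimage of `ψ t₁` to a preimage of `ψ t₀` and follow its image under `f`.
It starts in the open set `ψ '' (t₀, t₂)` and must leave it, necessarily through `ψ t₀` or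
`ψ t₂`. Until then it stays in the arc `ψ '' [t₀, t₂]`, so it lifts to a real path from `t₁` to
`t₀` or `t₂`, and a stretch of that path sweeps out exactly `[t₀, t₁]` or `[t₁, t₂]`.
-/

/-- `I` is an arc: a homeomorphic image of `[0,1]`. Since `[0,1]` is compact and `X`
is Hausdorff, a continuous injection suffices. -/
def IsArc {X : Type*} [TopologicalSpace X] (I : Set X) : Prop :=
  ∃ φ : ℝ → X, ContinuousOn φ (Set.Icc 0 1) ∧ Set.InjOn φ (Set.Icc 0 1) ∧
    φ '' Set.Icc 0 1 = I

/-- `I` is a free arc: an arc whose "interior part" is open in `X`. -/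
def IsFreeArc {X : Type*} [TopologicalSpace X] (I : Set X) : Prop :=
  ∃ φ : ℝ → X, ContinuousOn φ (Set.Icc 0 1) ∧ Set.InjOn φ (Set.Icc 0 1) ∧
    φ '' Set.Icc 0 1 = I ∧ IsOpen (φ '' Set.Ioo 0 1)

/-- `I` `h`-covers `J`: some subarc of `I` is mapped exactly onto `J` by `h`. -/
def Covers {X : Type*} [TopologicalSpace X] (h : X → X) (I J : Set X) : Prop :=
  ∃ K : Set X, IsArc K ∧ K ⊆ I ∧ h '' K = J

open Set

lemma isCompact_Icc_inter_preimage_singleton {γ : ℝ → ℝ} {p q : ℝ}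
    (hγ : ContinuousOn γ (Icc p q)) (y : ℝ) : IsCompact (Icc p q ∩ γ ⁻¹' {y}) :=
  isCompact_Icc.of_isClosed_subset
    (hγ.preimage_isClosed_of_isClosed isClosed_Icc isClosed_singleton) inter_subset_left

/-- Between the last visit to `γ p` and the subsequent first visit to `γ q`, the path `γ`
sweeps out exactly `[γ p, γ q]`. -/
lemma ContinuousOn.exists_image_Icc_eq_Icc {γ : ℝ → ℝ} {p q : ℝ} (hpq : p ≤ q)
    (hγ : ContinuousOn γ (Icc p q)) (hlt : γ p < γ q) :
    ∃ α β, p ≤ α ∧ α < β ∧ β ≤ q ∧ γ '' Icc α β = Icc (γ p) (γ q) := by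
  obtain ⟨α, ⟨⟨hpα, hαq⟩, hγα⟩, hα_last⟩ :=
    (isCompact_Icc_inter_preimage_singleton hγ (γ p)).exists_isGreatest
      ⟨p, left_mem_Icc.2 hpq, rfl⟩
  obtain ⟨β, ⟨⟨hαβ, hβq⟩, hγβ⟩, hβ_first⟩ :=
    (isCompact_Icc_inter_preimage_singleton (hγ.mono (Icc_subset_Icc_left hpα)) (γ q)
      ).exists_isLeast ⟨q, right_mem_Icc.2 hαq, rfl⟩
  rw [mem_preimage, mem_singleton_iff] at hγα hγβ
  have hsub : Icc α β ⊆ Icc p q := Icc_subset_Icc hpα hβq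
  have hcont : ContinuousOn γ (Icc α β) := hγ.mono hsub
  have hαβ : α < β := hαβ.lt_of_ne (by rintro rfl; exact hlt.ne (hγα.symm.trans hγβ))
  refine ⟨α, β, hpα, hαβ, hβq, subset_antisymm ?_ ?_⟩
  · rintro _ ⟨s, hs, rfl⟩
    constructor
    · by_contra! h
      obtain ⟨r, hr, hγr⟩ := intermediate_value_Icc hs.2 (hcont.mono (Icc_subset_Icc_left hs.1))
        ⟨h.le, hγβ ▸ hlt.le⟩
      have hrα : r ≤ α := hα_last ⟨hsub ⟨hs.1.trans hr.1, hr.2⟩, hγr⟩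
      obtain rfl : s = r := le_antisymm hr.1 (hrα.trans hs.1)
      exact h.ne hγr
    · by_contra! h
      obtain ⟨r, hr, hγr⟩ := intermediate_value_Icc hs.1 (hcont.mono (Icc_subset_Icc_right hs.2))
        ⟨hγα ▸ hlt.le, h.le⟩
      have hβr : β ≤ r := hβ_first ⟨⟨hr.1, hr.2.trans (hs.2.trans hβq)⟩, hγr⟩
      obtain rfl : s = r := le_antisymm (hs.2.trans hβr) hr.2
      exact h.ne' hγr
  · simpa only [hγα, hγβ] using intermediate_value_Icc hαβ.le hcont

lemma ContinuousOn.exists_image_Icc_eq_uIcc {γ : ℝ → ℝ} {p q : ℝ} (hpq : p ≤ q)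
    (hγ : ContinuousOn γ (Icc p q)) (hne : γ p ≠ γ q) :
    ∃ α β, p ≤ α ∧ α < β ∧ β ≤ q ∧ γ '' Icc α β = uIcc (γ p) (γ q) := by
  rcases hne.lt_or_gt with hlt | hgt
  · rw [uIcc_of_le hlt.le]
    exact hγ.exists_image_Icc_eq_Icc hpq hlt
  · obtain ⟨α, β, hpα, hαβ, hβq, himage⟩ :=
      hγ.neg.exists_image_Icc_eq_Icc hpq (neg_lt_neg hgt)
    refine ⟨α, β, hpα, hαβ, hβq, ?_⟩
    rw [uIcc_of_ge hgt.le, ← neg_neg (γ p), ← neg_neg (γ q), ← image_neg_Icc]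
    rw [Pi.neg_apply, Pi.neg_apply] at himage
    rw [← himage, image_image]
    simp only [Pi.neg_apply, neg_neg]

lemma ContinuousOn.continuousOn_invFunOn {α β : Type*} [TopologicalSpace α] [Nonempty α]
    [TopologicalSpace β] [T2Space β] {f : α → β} {K : Set α} (hK : IsCompact K)
    (hf : ContinuousOn f K) (hinj : InjOn f K) : ContinuousOn (Function.invFunOn f K) (f '' K) := by
  refine continuousOn_iff_isClosed.2 fun C hC ↦
    ⟨f '' (C ∩ K), ((hK.inter_left hC).image_of_continuousOn (hf.mono inter_subset_right)).isClosed,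
      ?_⟩
  ext y
  constructor
  · rintro ⟨hy, x, hx, rfl⟩
    rw [mem_preimage, hinj.leftInvOn_invFunOn hx] at hy
    exact ⟨⟨x, ⟨hy, hx⟩, rfl⟩, x, hx, rfl⟩
  · rintro ⟨⟨x, ⟨hxC, hx⟩, rfl⟩, -⟩
    refine ⟨?_, x, hx, rfl⟩
    rwa [mem_preimage, hinj.leftInvOn_invFunOn hx]

lemma ContinuousOn.exists_lift_of_mapsTo {α β γ : Type*} [TopologicalSpace α] [Nonempty α]
    [TopologicalSpace β] [T2Space β] [TopologicalSpace γ] {ψ : α → β} {K : Set α}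
    (hK : IsCompact K) (hψ : ContinuousOn ψ K) (hinj : InjOn ψ K) {G : γ → β} {S : Set γ}
    (hG : ContinuousOn G S) (hGS : MapsTo G S (ψ '' K)) :
    ∃ g : γ → α, ContinuousOn g S ∧ MapsTo g S K ∧ EqOn (ψ ∘ g) G S := by
  refine ⟨Function.invFunOn ψ K ∘ G, (hψ.continuousOn_invFunOn hK hinj).comp hG hGS, ?_, ?_⟩
  · exact fun s hs ↦ Function.invFunOn_mem (hGS hs)
  · exact fun s hs ↦ Function.invFunOn_eq (hGS hs)

lemma isOpen_image_Ioo_of_isOpen_image_Ioo_zero_one {X : Type*} [TopologicalSpace X]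
    [T2Space X] {ψ : ℝ → X} (hψc : ContinuousOn ψ (Icc 0 1)) (hψi : InjOn ψ (Icc 0 1))
    (hψo : IsOpen (ψ '' Ioo 0 1)) {a b : ℝ} (ha : 0 ≤ a) (hb : b ≤ 1) :
    IsOpen (ψ '' Ioo a b) := by
  have hsub : Ioo a b ⊆ Icc 0 1 := Ioo_subset_Icc_self.trans (Icc_subset_Icc ha hb)
  have hrest : IsClosed (ψ '' (Icc 0 1 \ Ioo a b)) :=
    ((isCompact_Icc.diff isOpen_Ioo).image_of_continuousOn (hψc.mono sdiff_subset)).isClosed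
  have hcompl : ψ '' Ioo a b = ψ '' Icc 0 1 \ ψ '' (Icc 0 1 \ Ioo a b) := by
    rw [← sdiff_sdiff_cancel_left hsub, hψi.image_sdiff, sdiff_sdiff_cancel_left hsub,
      inter_eq_right.2 sdiff_subset]
  have heq : ψ '' Ioo a b = ψ '' Ioo 0 1 \ ψ '' (Icc 0 1 \ Ioo a b) :=
    calc ψ '' Ioo a b = ψ '' Ioo 0 1 ∩ ψ '' Ioo a b :=
          (inter_eq_right.2 (image_mono (Ioo_subset_Ioo ha hb))).symm
      _ = ψ '' Ioo 0 1 \ ψ '' (Icc 0 1 \ Ioo a b) := by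
          rw [hcompl, ← inter_sdiff_assoc, inter_eq_left.2 (image_mono Ioo_subset_Icc_self)]
  rw [heq]
  exact hψo.sdiff hrest

lemma ContinuousOn.exists_first_exit {X : Type*} [TopologicalSpace X] {G : ℝ → X} {p q : ℝ}
    (hpq : p ≤ q) (hG : ContinuousOn G (Icc p q)) {W : Set X} (hW : IsOpen W) (hp : G p ∈ W)
    (hq : G q ∉ W) :
    ∃ u, p < u ∧ u ≤ q ∧ G u ∉ W ∧ MapsTo G (Icc p u) (closure W) := by
  have hexits : IsCompact (Icc p q ∩ G ⁻¹' Wᶜ) := isCompact_Icc.of_isClosed_subset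
    (hG.preimage_isClosed_of_isClosed isClosed_Icc hW.isClosed_compl) inter_subset_left
  obtain ⟨u, ⟨⟨hpu, huq⟩, hu⟩, hu_first⟩ :=
    hexits.exists_isLeast ⟨q, right_mem_Icc.2 hpq, hq⟩
  have hpu : p < u := hpu.lt_of_ne (by rintro rfl; exact hu hp)
  refine ⟨u, hpu, huq, hu, ?_⟩
  have hbefore : MapsTo G (Ico p u) W := fun s hs ↦ by
    by_contra h
    exact hs.2.not_ge (hu_first ⟨⟨hs.1, hs.2.le.trans huq⟩, h⟩)
  rw [← closure_Ico hpu.ne]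
  exact hbefore.closure_of_continuousOn (hG.mono (closure_Ico hpu.ne ▸ Icc_subset_Icc_right huq))

lemma exists_image_Icc_eq_image_Icc_or {X : Type*} [TopologicalSpace X] [T2Space X]
    {ψ : ℝ → X} (hψc : ContinuousOn ψ (Icc 0 1)) (hψi : InjOn ψ (Icc 0 1))
    (hψo : IsOpen (ψ '' Ioo 0 1)) {t₀ t₁ t₂ : ℝ} (ht₀ : 0 ≤ t₀) (h01 : t₀ < t₁) (h12 : t₁ < t₂)
    (ht₂ : t₂ ≤ 1) {G : ℝ → X} {p q : ℝ} (hpq : p ≤ q) (hG : ContinuousOn G (Icc p q))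
    (hGp : G p = ψ t₁) (hGq : G q = ψ t₀) :
    ∃ α β, p ≤ α ∧ α < β ∧ β ≤ q ∧
      (G '' Icc α β = ψ '' Icc t₀ t₁ ∨ G '' Icc α β = ψ '' Icc t₁ t₂) := by
  have hsub : Icc t₀ t₂ ⊆ Icc 0 1 := Icc_subset_Icc ht₀ ht₂
  have hinj : InjOn ψ (Icc t₀ t₂) := hψi.mono hsub
  have hW : IsOpen (ψ '' Ioo t₀ t₂) :=
    isOpen_image_Ioo_of_isOpen_image_Ioo_zero_one hψc hψi hψo ht₀ ht₂
  have hpW : G p ∈ ψ '' Ioo t₀ t₂ := hGp ▸ mem_image_of_mem ψ ⟨h01, h12⟩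
  have hqW : G q ∉ ψ '' Ioo t₀ t₂ := by
    rintro ⟨s, hs, hψs⟩
    exact hs.1.ne (hinj (Ioo_subset_Icc_self hs) (left_mem_Icc.2 (h01.trans h12).le)
      (hψs.trans hGq)).symm
  obtain ⟨u, hpu, huq, hu, hGu⟩ := hG.exists_first_exit hpq hW hpW hqW
  have hclosure : closure (ψ '' Ioo t₀ t₂) ⊆ ψ '' Icc t₀ t₂ :=
    closure_minimal (image_mono Ioo_subset_Icc_self)
      (isCompact_Icc.image_of_continuousOn (hψc.mono hsub)).isClosed
  obtain ⟨γ, hγc, hγK, hψγ⟩ := (hψc.mono hsub).exists_lift_of_mapsTo isCompact_Icc hinj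
    (hG.mono (Icc_subset_Icc_right huq)) (hGu.mono_right hclosure)
  have hγp : γ p = t₁ :=
    hinj (hγK (left_mem_Icc.2 hpu.le)) ⟨h01.le, h12.le⟩ ((hψγ (left_mem_Icc.2 hpu.le)).trans hGp)
  have hγu : γ u = t₀ ∨ γ u = t₂ := by
    have hu_mem : u ∈ Icc p u := right_mem_Icc.2 hpu.le
    by_contra! h
    exact hu (hψγ hu_mem ▸ mem_image_of_mem ψ
      ⟨(hγK hu_mem).1.lt_of_ne (Ne.symm h.1), (hγK hu_mem).2.lt_of_ne h.2⟩)
  have hne : γ p ≠ γ u := by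
    rcases hγu with h | h <;> rw [hγp, h]
    exacts [h01.ne', h12.ne]
  obtain ⟨α, β, hpα, hαβ, hβu, himage⟩ := hγc.exists_image_Icc_eq_uIcc hpu.le hne
  have hG_image : G '' Icc α β = ψ '' uIcc (γ p) (γ u) := by
    rw [← himage, ← image_comp, (hψγ.mono (Icc_subset_Icc hpα hβu)).image_eq]
  refine ⟨α, β, hpα, hαβ, hβu.trans huq, ?_⟩
  rw [hG_image, hγp]
  rcases hγu with h | h
  · exact .inl (by rw [h, uIcc_of_ge h01.le])
  · exact .inr (by rw [h, uIcc_of_le h12.le])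

lemma isArc_image_Icc {X : Type*} [TopologicalSpace X] {φ : ℝ → X}
    (hφc : ContinuousOn φ (Icc 0 1)) (hφi : InjOn φ (Icc 0 1)) {α β : ℝ}
    (hα : 0 ≤ α) (hαβ : α < β) (hβ : β ≤ 1) : IsArc (φ '' Icc α β) := by
  have hline : AffineMap.lineMap α β '' Icc (0 : ℝ) 1 = Icc α β := by
    rw [← segment_eq_image_lineMap, segment_eq_Icc hαβ.le]
  have hmaps : MapsTo (AffineMap.lineMap α β) (Icc (0 : ℝ) 1) (Icc 0 1) :=
    (mapsTo_image _ _).mono_right (hline ▸ Icc_subset_Icc hα hβ)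
  refine ⟨φ ∘ AffineMap.lineMap α β, hφc.comp (AffineMap.lineMap_continuous.continuousOn) hmaps,
    hφi.comp (AffineMap.lineMap_injective ℝ hαβ.ne).injOn hmaps, ?_⟩
  rw [image_comp, hline]

lemma IsArc.exists_param_of_ne {X : Type*} [TopologicalSpace X] {I : Set X} (hI : IsArc I)
    {x y : X} (hx : x ∈ I) (hy : y ∈ I) (hxy : x ≠ y) :
    ∃ φ : ℝ → X, ContinuousOn φ (Icc 0 1) ∧ InjOn φ (Icc 0 1) ∧ φ '' Icc 0 1 = I ∧
      ∃ s ∈ Icc (0 : ℝ) 1, ∃ s' ∈ Icc (0 : ℝ) 1, s < s' ∧ φ s = x ∧ φ s' = y := by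
  obtain ⟨φ, hφc, hφi, rfl⟩ := hI
  obtain ⟨s, hs, rfl⟩ := hx
  obtain ⟨s', hs', rfl⟩ := hy
  rcases (ne_of_apply_ne φ hxy).lt_or_gt with hlt | hgt
  · exact ⟨φ, hφc, hφi, rfl, s, hs, s', hs', hlt, rfl, rfl⟩
  have hflip : MapsTo (fun t : ℝ ↦ 1 - t) (Icc 0 1) (Icc 0 1) :=
    fun t ht ↦ ⟨sub_nonneg.2 ht.2, sub_le_self _ ht.1⟩
  refine ⟨fun t ↦ φ (1 - t), hφc.comp (continuous_const.sub continuous_id).continuousOn hflip,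
    hφi.comp (sub_right_injective.injOn) hflip, ?_, 1 - s, hflip hs, 1 - s', hflip hs',
    by linarith, by simp, by simp⟩
  rw [← image_image (g := φ), image_const_sub_Icc, sub_zero, sub_self]

lemma covers_image_Icc {X : Type*} [TopologicalSpace X] (f : X → X) {φ : ℝ → X}
    (hφc : ContinuousOn φ (Icc 0 1)) (hφi : InjOn φ (Icc 0 1)) {α β : ℝ}
    (hα : 0 ≤ α) (hαβ : α < β) (hβ : β ≤ 1) :
    Covers f (φ '' Icc 0 1) ((f ∘ φ) '' Icc α β) :=
  ⟨φ '' Icc α β, isArc_image_Icc hφc hφi hα hαβ hβ, image_mono (Icc_subset_Icc hα hβ),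
    (image_comp f φ _).symm⟩

theorem stmt_19_general {X : Type*} [MetricSpace X]
    (f : X → X) (hf : Continuous f)
    (I : Set X) (hI : IsArc I)
    (ψ : ℝ → X) (hψc : ContinuousOn ψ (Set.Icc 0 1)) (hψi : Set.InjOn ψ (Set.Icc 0 1))
    (hψo : IsOpen (ψ '' Set.Ioo 0 1))
    (a b c d t₀ t₁ t₂ : ℝ)
    (h0 : 0 ≤ t₀) (ht₀a : t₀ ≤ a) (hab : a < b) (hbt₁ : b ≤ t₁) (ht₁c : t₁ ≤ c)
    (hcd : c < d) (hdt₂ : d ≤ t₂) (ht₂ : t₂ ≤ 1)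
    (h₀ : ψ t₀ ∈ f '' I) (h₁ : ψ t₁ ∈ f '' I) :
    Covers f I (ψ '' Set.Icc t₀ t₁) ∨ Covers f I (ψ '' Set.Icc t₁ t₂) := by
  have h01 : t₀ < t₁ := by linarith
  have h12 : t₁ < t₂ := by linarith
  obtain ⟨x₀, hx₀, hfx₀⟩ := h₀
  obtain ⟨x₁, hx₁, hfx₁⟩ := h₁
  have hne : x₁ ≠ x₀ := by
    rintro rfl
    exact h01.ne' (hψi ⟨by linarith, by linarith⟩ ⟨h0, by linarith⟩ (hfx₁.symm.trans hfx₀))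
  obtain ⟨φ, hφc, hφi, rfl, s₁, hs₁, s₀, hs₀, hlt, rfl, rfl⟩ := hI.exists_param_of_ne hx₁ hx₀ hne
  obtain ⟨α, β, hα, hαβ, hβ, hcover⟩ := exists_image_Icc_eq_image_Icc_or hψc hψi hψo h0 h01 h12
    ht₂ hlt.le ((hf.comp_continuousOn hφc).mono (Icc_subset_Icc hs₁.1 hs₀.2)) hfx₁ hfx₀
  have hcovers := covers_image_Icc f hφc hφi (hs₁.1.trans hα) hαβ (hβ.trans hs₀.2)
  rcases hcover with h | h
  exacts [.inl (h ▸ hcovers), .inr (h ▸ hcovers)]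

theorem stmt_19 {X : Type*} [MetricSpace X] [CompactSpace X]
    (f : X → X) (hf : Continuous f)
    (I J : Set X) (hI : IsArc I)
    (ψ : ℝ → X) (hψc : ContinuousOn ψ (Set.Icc 0 1)) (hψi : Set.InjOn ψ (Set.Icc 0 1))
    (hψJ : ψ '' Set.Icc 0 1 = J) (hψo : IsOpen (ψ '' Set.Ioo 0 1))
    (a b c d t₀ t₁ t₂ : ℝ)
    (h0 : 0 ≤ t₀) (ht₀a : t₀ ≤ a) (hab : a < b) (hbt₁ : b ≤ t₁) (ht₁c : t₁ ≤ c)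
    (hcd : c < d) (hdt₂ : d ≤ t₂) (ht₂ : t₂ ≤ 1)
    (h₀ : ψ t₀ ∈ f '' I) (h₁ : ψ t₁ ∈ f '' I) (h₂ : ψ t₂ ∈ f '' I) :
    Covers f I (ψ '' Set.Icc t₀ t₁) ∨ Covers f I (ψ '' Set.Icc t₁ t₂) :=
  stmt_19_general f hf I hI ψ hψc hψi hψo a b c d t₀ t₁ t₂ h0 ht₀a hab hbt₁ ht₁c hcd hdt₂ ht₂ h₀ h₁
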